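/- arXiv:1503.06506 — 2 statements merged into one kernel-verified Lean document; each statement's English description precedes it below -/
import Mathlib

section
/- Let f_12, f_13 ∈ 𝓕 and let g_23 be the case-1 virtual interaction they induce. Then g̃_23(d) < f̃_12(d) for every d > 0; consequently ∫_d^1 g̃_23(x) dx → −∞ as d → 0⁺, and g_23 ∈ 𝓕. -/
open Set Filter Topology MeasureTheory Matrix Function

attribute [local instance] Classical.propDecidable

noncomputable section

/-- `f̃(d) = d * f(d)`. -/
def tildeFn (f : ℝ → ℝ) : ℝ → ℝ := fun d => d * f d

/-- Membership in the class `𝓕` of monotone interaction laws: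
`f` is `C¹` on `ℝ₊ = (0,∞)`, `f̃′ > 0` on `ℝ₊`, `f̃` has a zero, and
`∫_d^1 f̃(x) dx → −∞` as `d → 0⁺`. -/
def MemF (f : ℝ → ℝ) : Prop :=
  ContDiffOn ℝ 1 f (Set.Ioi 0) ∧
  (∀ d > (0:ℝ), 0 < deriv (tildeFn f) d) ∧
  (∃ d > (0:ℝ), tildeFn f d = 0) ∧
  Tendsto (fun d => ∫ x in d..(1:ℝ), tildeFn f x) (𝓝[>] (0:ℝ)) atBot

/-- The space `C¹(ℝ₊, ℝ)`. -/
def C1Pos : Type := {f : ℝ → ℝ // ContDiffOn ℝ 1 f (Set.Ioi 0)}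

/-- The Whitney `C¹`-topology on `C¹(ℝ₊, ℝ)`, generated by the basic open sets
`B_δ(f) = {g : |g(d) − f(d)| + |g′(d) − f′(d)| < δ(d) for all d > 0}`. -/
instance : TopologicalSpace C1Pos :=
  TopologicalSpace.generateFrom
    { S | ∃ (f : C1Pos) (δ : ℝ → ℝ), ContinuousOn δ (Set.Ioi 0) ∧ (∀ d > (0:ℝ), 0 < δ d) ∧
        S = { g : C1Pos | ∀ d > (0:ℝ), |g.1 d - f.1 d| + |deriv g.1 d - deriv f.1 d| < δ d } }

/-- The class `𝓕` as a topological space (subspace of `C¹(ℝ₊,ℝ)`). -/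
def FF : Type := {f : C1Pos // MemF f.1}

instance : TopologicalSpace FF := instTopologicalSpaceSubtype

/-- `G` is a triangulated Laman graph: there is a Henneberg-type construction order
(a relabeling `σ`) starting from the edge between the first two vertices, in which every
later vertex is joined to exactly two earlier, adjacent, vertices. -/
def IsTLG {N : ℕ} (G : SimpleGraph (Fin N)) : Prop :=
  2 ≤ N ∧
  ∃ (σ : Equiv.Perm (Fin N)) (par₁ par₂ : Fin N → Fin N),
    (∀ k : Fin N, 2 ≤ (k : ℕ) →
      ((par₁ k : ℕ) < (k : ℕ) ∧ (par₂ k : ℕ) < (k : ℕ) ∧ par₁ k ≠ par₂ k ∧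
        G.Adj (σ (par₁ k)) (σ (par₂ k)))) ∧
    (∀ i j : Fin N, G.Adj (σ i) (σ j) ↔
      (((i : ℕ) = 0 ∧ (j : ℕ) = 1) ∨ ((i : ℕ) = 1 ∧ (j : ℕ) = 0) ∨
       (2 ≤ (i : ℕ) ∧ (j = par₁ i ∨ j = par₂ i)) ∨
       (2 ≤ (j : ℕ) ∧ (i = par₁ j ∨ i = par₂ j))))

/-- Euclidean distance on `ℝ²` (coordinates `(a,b)`). -/
def dist2 (x y : ℝ × ℝ) : ℝ := Real.sqrt ((x.1 - y.1)^2 + (x.2 - y.2)^2)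

/-- `p` belongs to the configuration space `P`: no collision of adjacent agents. -/
def InConfigSpace {N : ℕ} (G : SimpleGraph (Fin N)) (p : Fin N → ℝ × ℝ) : Prop :=
  ∀ i j, G.Adj i j → p i ≠ p j

/-- `p` is an equilibrium of the RMA system `ẋᵢ = Σ_{j : (i,j) ∈ E} f_ij(d_ij)(x_j − x_i)`. -/
def IsEquilibrium {N : ℕ} (G : SimpleGraph (Fin N)) (f : Fin N → Fin N → ℝ → ℝ)
    (p : Fin N → ℝ × ℝ) : Prop :=
  ∀ i, (∑ j, if G.Adj i j then (f i j (dist2 (p i) (p j))) • (p j - p i) else (0:ℝ×ℝ)) = 0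

/-- The potential function `Φ(p) = Σ_{(i,j) ∈ E} ∫_1^{d_ij} x f_ij(x) dx`
(each edge counted once; the factor 1/2 compensates the double count over ordered pairs). -/
def potential {N : ℕ} (G : SimpleGraph (Fin N)) (f : Fin N → Fin N → ℝ → ℝ)
    (p : Fin N → ℝ × ℝ) : ℝ :=
  (1/2) * ∑ i, ∑ j, if G.Adj i j then ∫ x in (1:ℝ)..(dist2 (p i) (p j)), x * f i j x else 0

/-- Coordinate directions on the configuration space, in the order `(a₁,…,a_N,b₁,…,b_N)`. -/
def basisVec {N : ℕ} : (Fin N ⊕ Fin N) → (Fin N → ℝ × ℝ) :=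
  Sum.elim (fun i => Pi.single i ((1:ℝ), (0:ℝ))) (fun i => Pi.single i ((0:ℝ), (1:ℝ)))

/-- The Hessian matrix of `Φ` at `p` in the coordinates `(a₁,…,a_N,b₁,…,b_N)`. -/
def hessian {N : ℕ} (Φ : (Fin N → ℝ × ℝ) → ℝ) (p : Fin N → ℝ × ℝ) :
    Matrix (Fin N ⊕ Fin N) (Fin N ⊕ Fin N) ℝ :=
  Matrix.of fun u v => fderiv ℝ (fun q => fderiv ℝ Φ q (basisVec v)) p (basisVec u)

/-- The inertia `𝐧(M) = (n₊(M), n₀(M), n₋(M))` of a real symmetric matrix: the numbers of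
positive, zero, and negative eigenvalues (counted with multiplicity). -/
def inertia {m : Type*} [Fintype m] [DecidableEq m] (M : Matrix m m ℝ) : ℕ × ℕ × ℕ :=
  if h : M.IsHermitian then
    ((Finset.univ.filter fun i => 0 < h.eigenvalues i).card,
     (Finset.univ.filter fun i => h.eigenvalues i = 0).card,
     (Finset.univ.filter fun i => h.eigenvalues i < 0).card)
  else (0, 0, 0)

/-- The number `n₀(M)` of zero eigenvalues of a real symmetric matrix. -/
def n0 {m : Type*} [Fintype m] [DecidableEq m] (M : Matrix m m ℝ) : ℕ := (inertia M).2.1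

/-- The vector-valued sign function. -/
def sgn3 (x : ℝ) : ℕ × ℕ × ℕ :=
  if 0 < x then (1,0,0) else if x = 0 then (0,1,0) else (0,0,1)

/-- `q` lies in the `SE(2)`-orbit of `p` (rigid motions: rotation by `(c,s)` with
`c² + s² = 1` followed by translation by `(vx,vy)`). -/
def sameOrbit {N : ℕ} (p q : Fin N → ℝ × ℝ) : Prop :=
  ∃ c s vx vy : ℝ, c^2 + s^2 = 1 ∧
    ∀ i, q i = (c * (p i).1 - s * (p i).2 + vx, s * (p i).1 + c * (p i).2 + vy)

/-- The interaction laws determined by an ensemble `ω ∈ 𝓕^{|E|}`. -/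
def ensembleLaws {N : ℕ} {G : SimpleGraph (Fin N)} (ω : G.edgeSet → FF) :
    Fin N → Fin N → ℝ → ℝ :=
  fun i j => if h : G.Adj i j then (ω ⟨s(i,j), G.mem_edgeSet.mpr h⟩).1.1 else 0

/-- The line configuration on the `a`-axis with coordinates `a`. -/
def lineConfig {N : ℕ} (a : Fin N → ℝ) : Fin N → ℝ × ℝ := fun i => (a i, 0)

/-- The matrix `F_p` of a line configuration with coordinates `a`: symmetric, zero row sums,
off-diagonal entries `φ_ij(d_ij)` on edges and `0` otherwise. -/
def FMat {N : ℕ} (G : SimpleGraph (Fin N)) (φ : Fin N → Fin N → ℝ → ℝ)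
    (a : Fin N → ℝ) : Matrix (Fin N) (Fin N) ℝ :=
  Matrix.of fun i j =>
    if i = j then -∑ k, (if G.Adj i k then φ i k |a i - a k| else 0)
    else if G.Adj i j then φ i j |a i - a j| else 0

/-- The matrix `d̃F_p`: off-diagonal entries `f̃′_ij(d_ij)` on edges. -/
def dFMat {N : ℕ} (G : SimpleGraph (Fin N)) (f : Fin N → Fin N → ℝ → ℝ)
    (a : Fin N → ℝ) : Matrix (Fin N) (Fin N) ℝ :=
  FMat G (fun i j d => deriv (tildeFn (f i j)) d) a

/-- Case 1 balanced distance: the (generically unique) `d₁₂(d)` with `0 < d₁₂ < d` and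
`f̃₁₂(d₁₂) = f̃₁₃(d − d₁₂)`. -/
def case1d12 (f12 f13 : ℝ → ℝ) (d : ℝ) : ℝ :=
  Classical.epsilon fun t => 0 < t ∧ t < d ∧ tildeFn f12 t = tildeFn f13 (d - t)

/-- The case-1 virtual interaction: `g̃₂₃(d) = f̃₁₂(d₁₂(d))`. -/
def g23Case1 (f12 f13 : ℝ → ℝ) : ℝ → ℝ :=
  fun d => tildeFn f12 (case1d12 f12 f13 d) / d

/-- Case 2 balanced distance: the (generically unique) `d₁₂(d) > 0` with
`f̃₁₂(d₁₂) + f̃₁₃(d₁₂ + d) = 0`. -/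
def case2d12 (f12 f13 : ℝ → ℝ) (d : ℝ) : ℝ :=
  Classical.epsilon fun t => 0 < t ∧ tildeFn f12 t + tildeFn f13 (t + d) = 0

/-- The case-2 virtual interaction: `g̃₂₃(d) = f̃₁₃(d₁₃(d))`, `d₁₃(d) = d₁₂(d) + d`. -/
def g23Case2 (f12 f13 : ℝ → ℝ) : ℝ → ℝ :=
  fun d => tildeFn f13 (case2d12 f12 f13 d + d) / d

/-- The case-3 virtual interaction: case 2 with the roles of agents 2,3 (and `f₁₂`,`f₁₃`)
interchanged. -/
def g23Case3 (f12 f13 : ℝ → ℝ) : ℝ → ℝ := g23Case2 f13 f12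

/-- The virtual interaction between agents 2 and 3 induced by `f₁₂`, `f₁₃`, chosen according
to which of the three aligned agents (at coordinates `a1`, `a2`, `a3`) lies between the
other two. -/
def virtualG (f12 f13 : ℝ → ℝ) (a1 a2 a3 : ℝ) : ℝ → ℝ :=
  if (a2 < a1 ∧ a1 < a3) ∨ (a3 < a1 ∧ a1 < a2) then g23Case1 f12 f13
  else if (a1 < a2 ∧ a2 < a3) ∨ (a3 < a2 ∧ a2 < a1) then g23Case2 f12 f13
  else g23Case3 f12 f13

/-- The interaction laws of the reduced system: vertex `0` (the last Henneberg vertex,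
the paper's vertex 1) is deleted, reduced vertex `i` is original vertex `i+1`, and the law on
the reduced edge `(0,1)` (the paper's edge `(2,3)`) is `f*₂₃ = f₂₃ + g₂₃`. -/
def reducedLaws {n : ℕ} (f : Fin (n+3) → Fin (n+3) → ℝ → ℝ) (g : ℝ → ℝ) :
    Fin (n+2) → Fin (n+2) → ℝ → ℝ :=
  fun i j => if (i = 0 ∧ j = 1) ∨ (i = 1 ∧ j = 0)
    then fun d => f i.succ j.succ d + g d
    else f i.succ j.succ

end

/-!
Write `F = f̃₁₂`, `G = f̃₁₃`. Both are strictly increasing and continuous on `(0, ∞)`, and the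
integral condition forces them to `−∞` at `0⁺`; hence `t ↦ F t - G (d - t)` is strictly increasing
on `(0, d)` with a sign change, so `d₁₂(d)` exists, is unique, and depends continuously on `d`.
Implicit differentiation of `F (d₁₂ d) = G (d - d₁₂ d)` gives `d₁₂' = G' / (F' + G')`, so
`g̃₂₃' = F' G' / (F' + G')` is continuous and positive. As `d₁₂(d) < d`,
`g̃₂₃(d) = F (d₁₂ d) < F d`, which yields the integral condition for `g₂₃`; and `g̃₂₃` vanishes
at `z₁₂ + z₁₃` for zeros `z₁₂`, `z₁₃` of `F` and `G`.
-/

section Balance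

variable {F G : ℝ → ℝ} {d : ℝ}

lemma strictMonoOn_sub_comp_sub (hF : StrictMonoOn F (Ioi 0)) (hG : StrictMonoOn G (Ioi 0))
    (d : ℝ) : StrictMonoOn (fun t => F t - G (d - t)) (Ioo 0 d) := by
  intro s hs t ht hst
  have hF' := hF hs.1 ht.1 hst
  have hG' := hG (show (0 : ℝ) < d - t by linarith [ht.2]) (show (0 : ℝ) < d - s by linarith [hs.2])
    (by linarith)
  dsimp only
  linarith

lemma exists_lt_comp_sub (hF : Tendsto F (𝓝[>] 0) atBot) (hG : StrictMonoOn G (Ioi 0))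
    (hd : 0 < d) : ∃ t ∈ Ioo 0 (d / 2), F t < G (d - t) := by
  obtain ⟨t, hFt, ht⟩ := ((hF.eventually (eventually_lt_atBot (G (d / 2)))).and
    (Ioo_mem_nhdsGT (half_pos hd))).exists
  have hdt : d / 2 < d - t := by linarith [ht.2]
  exact ⟨t, ht, hFt.trans (hG (half_pos hd) ((half_pos hd).trans hdt) hdt)⟩

lemma exists_balance (hF : StrictMonoOn F (Ioi 0)) (hG : StrictMonoOn G (Ioi 0))
    (hFc : ContinuousOn F (Ioi 0)) (hGc : ContinuousOn G (Ioi 0))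
    (hF0 : Tendsto F (𝓝[>] 0) atBot) (hG0 : Tendsto G (𝓝[>] 0) atBot) (hd : 0 < d) :
    ∃ t, 0 < t ∧ t < d ∧ F t = G (d - t) := by
  obtain ⟨a, ha, hFa⟩ := exists_lt_comp_sub hF0 hG hd
  obtain ⟨s, hs, hGs⟩ := exists_lt_comp_sub hG0 hF hd
  have hIcc : Icc a (d - s) ⊆ Ioo 0 d := fun x hx => ⟨ha.1.trans_le hx.1, by linarith [hx.2, hs.1]⟩
  have hcont : ContinuousOn (fun t => F t - G (d - t)) (Icc a (d - s)) :=
    (hFc.mono fun x hx => (hIcc hx).1).sub <| hGc.comp (continuousOn_const.sub continuousOn_id)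
      fun x hx => show 0 < d - x by linarith [(hIcc hx).2]
  have hsign : (0 : ℝ) ∈ Ioo (F a - G (d - a)) (F (d - s) - G (d - (d - s))) :=
    ⟨by linarith, by rw [sub_sub_cancel]; linarith⟩
  obtain ⟨t, ht, hzero⟩ := intermediate_value_Ioo (by linarith [ha.2, hs.2]) hcont hsign
  exact ⟨t, ha.1.trans ht.1, by linarith [ht.2, hs.1], sub_eq_zero.1 hzero⟩

section StrictMono

variable (hF : StrictMonoOn F (Ioi 0)) (hG : StrictMonoOn G (Ioi 0))
include hF hG

lemma balance_unique {s t : ℝ} (hs : 0 < s ∧ s < d ∧ F s = G (d - s))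
    (ht : 0 < t ∧ t < d ∧ F t = G (d - t)) : s = t :=
  (strictMonoOn_sub_comp_sub hF hG d).injOn ⟨hs.1, hs.2.1⟩ ⟨ht.1, ht.2.1⟩ <| by
    simp only [hs.2.2, ht.2.2, sub_self]

lemma lt_balance_iff {s t : ℝ} (hs : 0 < s ∧ s < d ∧ F s = G (d - s)) (ht : t ∈ Ioo 0 d) :
    t < s ↔ F t < G (d - t) := by
  rw [← (strictMonoOn_sub_comp_sub hF hG d).lt_iff_lt ht ⟨hs.1, hs.2.1⟩, hs.2.2, sub_self,
    sub_neg]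

lemma balance_lt_iff {s t : ℝ} (hs : 0 < s ∧ s < d ∧ F s = G (d - s)) (ht : t ∈ Ioo 0 d) :
    s < t ↔ G (d - t) < F t := by
  rw [← (strictMonoOn_sub_comp_sub hF hG d).lt_iff_lt ⟨hs.1, hs.2.1⟩ ht, hs.2.2, sub_self,
    sub_pos]

lemma continuousAt_of_balance {D : ℝ → ℝ} (hGc : ContinuousOn G (Ioi 0))
    (hD : ∀ x > 0, 0 < D x ∧ D x < x ∧ F (D x) = G (x - D x)) (hd : 0 < d) :
    ContinuousAt D d := by
  have hGshift : ∀ a < d, ContinuousAt (fun x => G (x - a)) d := fun a ha =>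
    (hGc.continuousAt (Ioi_mem_nhds (sub_pos.2 ha))).comp (f := fun x => x - a)
      (continuousAt_id.sub continuousAt_const)
  obtain ⟨hD0, hDd, -⟩ := hD d hd
  refine tendsto_order.2 ⟨fun a ha => ?_, fun b hb => ?_⟩
  · obtain ⟨a', ha', ha'D⟩ := exists_between (max_lt ha hD0)
    have ha'0 : 0 < a' := (le_max_right _ _).trans_lt ha'
    have ha'd : a' < d := ha'D.trans hDd
    have hlt : F a' < G (d - a') := (lt_balance_iff hF hG (hD d hd) ⟨ha'0, ha'd⟩).1 ha'D
    filter_upwards [(hGshift a' ha'd).eventually_const_lt hlt, eventually_gt_nhds ha'd]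
      with x hx hax
    exact (le_max_left _ _).trans_lt <| ha'.trans <|
      (lt_balance_iff hF hG (hD x (ha'0.trans hax)) ⟨ha'0, hax⟩).2 hx
  · obtain ⟨b', hb', hb'b⟩ := exists_between (lt_min hb hDd)
    have hb'0 : 0 < b' := hD0.trans hb'
    have hb'd : b' < d := hb'b.trans_le (min_le_right _ _)
    have hlt : G (d - b') < F b' := (balance_lt_iff hF hG (hD d hd) ⟨hb'0, hb'd⟩).1 hb'
    filter_upwards [(hGshift b' hb'd).eventually_lt_const hlt, eventually_gt_nhds hb'd]
      with x hx hbx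
    exact ((balance_lt_iff hF hG (hD x (hb'0.trans hbx)) ⟨hb'0, hbx⟩).2 hx).trans
      (hb'b.trans_le (min_le_left _ _))

end StrictMono

/-- Implicit differentiation of `F (D x) = G (x - D x)`: writing `G⁻¹` for a local inverse of `G`,
`D` is a local inverse of `t ↦ t + G⁻¹ (F t)`. -/
lemma hasDerivAt_of_balance {D : ℝ → ℝ} {F' G' : ℝ} (hF : HasDerivAt F F' (D d))
    (hG : HasStrictDerivAt G G' (d - D d)) (hG' : G' ≠ 0) (hFG' : F' + G' ≠ 0)
    (hD : ContinuousAt D d) (hbal : ∀ᶠ x in 𝓝 d, F (D x) = G (x - D x)) :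
    HasDerivAt D (G' / (F' + G')) d := by
  set Ginv := hG.localInverse G G' (d - D d) hG'
  have hGinv : HasDerivAt Ginv G'⁻¹ (F (D d)) := by
    rw [hbal.self_of_nhds]
    exact (hG.to_localInverse hG').hasDerivAt
  have hΨ : HasDerivAt (fun t => t + Ginv (F t)) ((F' + G') / G') (D d) := by
    have hslope : 1 + G'⁻¹ * F' = (F' + G') / G' := by field_simp; ring
    exact hslope ▸ (hasDerivAt_id' (D d)).fun_add (hGinv.comp (D d) hF)
  have hleft : ∀ᶠ x in 𝓝 d, D x + Ginv (F (D x)) = x := by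
    have hE : Tendsto (fun x => x - D x) (𝓝 d) (𝓝 (d - D d)) := continuousAt_id.sub hD
    filter_upwards [hbal, hE.eventually (hG.eventually_left_inverse hG')] with x hx hinv
    show D x + hG.localInverse G G' (d - D d) hG' (F (D x)) = x
    rw [hx, hinv, add_sub_cancel]
  simpa only [inv_div] using HasDerivAt.of_local_left_inverse hD hΨ (div_ne_zero hFG' hG') hleft

end Balance

section Integral

variable {F H : ℝ → ℝ}

lemma intervalIntegrable_of_continuousOn_Ioi (hF : ContinuousOn F (Ioi 0)) {a b : ℝ}
    (ha : 0 < a) (hb : 0 < b) : IntervalIntegrable F volume a b :=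
  (hF.mono fun _ hx => (lt_min ha hb).trans_le hx.1).intervalIntegrable

/-- If `F > b` on `(0, 1]`, then `∫_d^1 F ≥ (1 - d) b ≥ min b 0` for every `d ∈ (0, 1)`. -/
lemma tendsto_atBot_of_tendsto_integral_atBot (hF : MonotoneOn F (Ioi 0))
    (hFc : ContinuousOn F (Ioi 0))
    (hint : Tendsto (fun d => ∫ x in d..1, F x) (𝓝[>] 0) atBot) :
    Tendsto F (𝓝[>] 0) atBot := by
  rw [tendsto_atBot]
  intro b
  obtain ⟨t, ht, htb⟩ : ∃ t ∈ Ioc (0 : ℝ) 1, F t ≤ b := by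
    by_contra! hb
    obtain ⟨d, hdint, hd⟩ := ((hint.eventually (eventually_lt_atBot (min b 0))).and
      (Ioo_mem_nhdsGT one_pos)).exists
    have hge : ∫ _ in d..1, b ≤ ∫ x in d..1, F x :=
      intervalIntegral.integral_mono_on hd.2.le intervalIntegrable_const
        (intervalIntegrable_of_continuousOn_Ioi hFc hd.1 one_pos)
        fun x hx => (hb x ⟨hd.1.trans_le hx.1, hx.2⟩).le
    rw [intervalIntegral.integral_const, smul_eq_mul] at hge
    have hmin : min b 0 ≤ (1 - d) * b := by
      rcases le_total 0 b with h | h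
      · exact (min_le_right _ _).trans (mul_nonneg (by linarith [hd.2]) h)
      · exact (min_le_left _ _).trans (by nlinarith [hd.1])
    linarith
  filter_upwards [Ioo_mem_nhdsGT ht.1] with x hx
  exact (hF hx.1 ht.1 hx.2.le).trans htb

lemma tendsto_integral_atBot_of_le (hF : ContinuousOn F (Ioi 0)) (hH : ContinuousOn H (Ioi 0))
    (hle : ∀ x > 0, F x ≤ H x) (hint : Tendsto (fun d => ∫ x in d..1, H x) (𝓝[>] 0) atBot) :
    Tendsto (fun d => ∫ x in d..1, F x) (𝓝[>] 0) atBot := by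
  refine tendsto_atBot_mono' _ ?_ hint
  filter_upwards [Ioo_mem_nhdsGT one_pos] with d hd
  exact intervalIntegral.integral_mono_on hd.2.le
    (intervalIntegrable_of_continuousOn_Ioi hF hd.1 one_pos)
    (intervalIntegrable_of_continuousOn_Ioi hH hd.1 one_pos) fun x hx => hle x (hd.1.trans_le hx.1)

end Integral

lemma contDiffOn_one_of_hasDerivAt {f f' : ℝ → ℝ} {s : Set ℝ} (hs : IsOpen s)
    (hf : ∀ x ∈ s, HasDerivAt f (f' x) x) (hf' : ContinuousOn f' s) : ContDiffOn ℝ 1 f s := by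
  rw [show (1 : WithTop ℕ∞) = 0 + 1 from rfl, contDiffOn_succ_iff_deriv_of_isOpen hs]
  refine ⟨fun x hx => (hf x hx).differentiableAt.differentiableWithinAt, by simp, ?_⟩
  exact contDiffOn_zero.2 <| hf'.congr fun x hx => (hf x hx).deriv

section MemF

variable {f : ℝ → ℝ}

lemma MemF.contDiffOn_tildeFn (hf : MemF f) : ContDiffOn ℝ 1 (tildeFn f) (Ioi 0) :=
  contDiffOn_id.mul hf.1

lemma MemF.continuousOn_tildeFn (hf : MemF f) : ContinuousOn (tildeFn f) (Ioi 0) :=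
  hf.contDiffOn_tildeFn.continuousOn

lemma MemF.continuousOn_deriv_tildeFn (hf : MemF f) :
    ContinuousOn (deriv (tildeFn f)) (Ioi 0) :=
  hf.contDiffOn_tildeFn.continuousOn_deriv_of_isOpen isOpen_Ioi le_rfl

lemma MemF.hasStrictDerivAt_tildeFn (hf : MemF f) {d : ℝ} (hd : 0 < d) :
    HasStrictDerivAt (tildeFn f) (deriv (tildeFn f) d) d := by
  have h := (hf.contDiffOn_tildeFn.contDiffAt (Ioi_mem_nhds hd)).hasStrictDerivAt one_ne_zero
  rwa [h.hasDerivAt.deriv] at h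

lemma MemF.strictMonoOn_tildeFn (hf : MemF f) : StrictMonoOn (tildeFn f) (Ioi 0) :=
  strictMonoOn_of_deriv_pos (convex_Ioi 0) hf.continuousOn_tildeFn fun x hx =>
    hf.2.1 x (interior_subset hx)

lemma MemF.tendsto_tildeFn_atBot (hf : MemF f) : Tendsto (tildeFn f) (𝓝[>] 0) atBot :=
  tendsto_atBot_of_tendsto_integral_atBot hf.strictMonoOn_tildeFn.monotoneOn
    hf.continuousOn_tildeFn hf.2.2.2

end MemF

section Case1

variable {f12 f13 : ℝ → ℝ} {d : ℝ}

lemma tildeFn_g23Case1 (hd : d ≠ 0) :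
    tildeFn (g23Case1 f12 f13) d = tildeFn f12 (case1d12 f12 f13 d) := by
  simp only [tildeFn, g23Case1]
  field_simp

variable (h12 : MemF f12) (h13 : MemF f13)
include h12 h13

lemma case1d12_spec (hd : 0 < d) :
    0 < case1d12 f12 f13 d ∧ case1d12 f12 f13 d < d ∧
      tildeFn f12 (case1d12 f12 f13 d) = tildeFn f13 (d - case1d12 f12 f13 d) :=
  Classical.epsilon_spec <| exists_balance h12.strictMonoOn_tildeFn h13.strictMonoOn_tildeFn
    h12.continuousOn_tildeFn h13.continuousOn_tildeFn h12.tendsto_tildeFn_atBot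
    h13.tendsto_tildeFn_atBot hd

lemma case1d12_eq {t : ℝ} (hd : 0 < d) (ht : 0 < t ∧ t < d ∧ tildeFn f12 t = tildeFn f13 (d - t)) :
    case1d12 f12 f13 d = t :=
  balance_unique h12.strictMonoOn_tildeFn h13.strictMonoOn_tildeFn (case1d12_spec h12 h13 hd) ht

lemma continuousOn_case1d12 : ContinuousOn (case1d12 f12 f13) (Ioi 0) := fun _ hx =>
  (continuousAt_of_balance h12.strictMonoOn_tildeFn h13.strictMonoOn_tildeFn
    h13.continuousOn_tildeFn (fun _ hx => case1d12_spec h12 h13 hx) hx).continuousWithinAt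

lemma hasDerivAt_tildeFn_g23Case1 (hd : 0 < d) :
    HasDerivAt (tildeFn (g23Case1 f12 f13))
      (deriv (tildeFn f12) (case1d12 f12 f13 d) * deriv (tildeFn f13) (d - case1d12 f12 f13 d) /
        (deriv (tildeFn f12) (case1d12 f12 f13 d) +
          deriv (tildeFn f13) (d - case1d12 f12 f13 d))) d := by
  obtain ⟨hD0, hDd, -⟩ := case1d12_spec h12 h13 hd
  have hD := hasDerivAt_of_balance (h12.hasStrictDerivAt_tildeFn hD0).hasDerivAt
    (h13.hasStrictDerivAt_tildeFn (sub_pos.2 hDd)) (h13.2.1 _ (sub_pos.2 hDd)).ne'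
    (add_pos (h12.2.1 _ hD0) (h13.2.1 _ (sub_pos.2 hDd))).ne'
    ((continuousOn_case1d12 h12 h13).continuousAt (Ioi_mem_nhds hd))
    (eventually_gt_nhds hd |>.mono fun x hx => (case1d12_spec h12 h13 hx).2.2)
  rw [mul_div_assoc]
  refine ((h12.hasStrictDerivAt_tildeFn hD0).hasDerivAt.comp d hD).congr_of_eventuallyEq ?_
  filter_upwards [eventually_gt_nhds hd] with x hx
  exact tildeFn_g23Case1 hx.ne'

lemma deriv_tildeFn_g23Case1_pos (hd : 0 < d) : 0 < deriv (tildeFn (g23Case1 f12 f13)) d := by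
  obtain ⟨hD0, hDd, -⟩ := case1d12_spec h12 h13 hd
  rw [(hasDerivAt_tildeFn_g23Case1 h12 h13 hd).deriv]
  have := h12.2.1 _ hD0
  have := h13.2.1 _ (sub_pos.2 hDd)
  positivity

lemma contDiffOn_tildeFn_g23Case1 : ContDiffOn ℝ 1 (tildeFn (g23Case1 f12 f13)) (Ioi 0) := by
  refine contDiffOn_one_of_hasDerivAt isOpen_Ioi
    (fun _ hx => hasDerivAt_tildeFn_g23Case1 h12 h13 hx) ?_
  have hD := continuousOn_case1d12 h12 h13
  have hDmaps : MapsTo (case1d12 f12 f13) (Ioi 0) (Ioi 0) := fun _ hx =>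
    (case1d12_spec h12 h13 hx).1
  have hEmaps : MapsTo (fun x => x - case1d12 f12 f13 x) (Ioi 0) (Ioi 0) := fun x hx =>
    sub_pos.2 (case1d12_spec h12 h13 hx).2.1
  have ha := h12.continuousOn_deriv_tildeFn.comp hD hDmaps
  have hb := h13.continuousOn_deriv_tildeFn.comp (continuousOn_id.sub hD) hEmaps
  exact (ha.mul hb).div (ha.add hb) fun x hx =>
    (add_pos (h12.2.1 _ (hDmaps hx)) (h13.2.1 _ (hEmaps hx))).ne'

lemma contDiffOn_g23Case1 : ContDiffOn ℝ 1 (g23Case1 f12 f13) (Ioi 0) := by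
  refine ((contDiffOn_tildeFn_g23Case1 h12 h13).div contDiffOn_id fun x hx => hx.ne').congr
    fun x hx => ?_
  exact (mul_div_cancel_left₀ _ (ne_of_gt hx)).symm

lemma tildeFn_g23Case1_lt (hd : 0 < d) : tildeFn (g23Case1 f12 f13) d < tildeFn f12 d := by
  obtain ⟨hD0, hDd, -⟩ := case1d12_spec h12 h13 hd
  rw [tildeFn_g23Case1 hd.ne']
  exact h12.strictMonoOn_tildeFn hD0 hd hDd

lemma exists_tildeFn_g23Case1_eq_zero : ∃ d > 0, tildeFn (g23Case1 f12 f13) d = 0 := by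
  obtain ⟨z12, hz12, h12z⟩ := h12.2.2.1
  obtain ⟨z13, hz13, h13z⟩ := h13.2.2.1
  have hz := add_pos hz12 hz13
  refine ⟨z12 + z13, hz, ?_⟩
  rw [tildeFn_g23Case1 hz.ne', case1d12_eq h12 h13 hz ⟨hz12, by linarith, by simp [h12z, h13z]⟩,
    h12z]

end Case1

/-- for the case-1 virtual interaction `g₂₃` induced by `f₁₂, f₁₃ ∈ 𝓕`,
`g̃₂₃(d) < f̃₁₂(d)` for all `d > 0`; consequently `∫_d^1 g̃₂₃ → −∞` as `d → 0⁺`, and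
`g₂₃ ∈ 𝓕`. -/
theorem statement8 (f12 f13 : ℝ → ℝ) (h12 : MemF f12) (h13 : MemF f13) :
    (∀ d > (0:ℝ), tildeFn (g23Case1 f12 f13) d < tildeFn f12 d) ∧
    Tendsto (fun d => ∫ x in d..(1:ℝ), tildeFn (g23Case1 f12 f13) x) (𝓝[>] (0:ℝ)) atBot ∧
    MemF (g23Case1 f12 f13) := by
  have hlt : ∀ d > (0:ℝ), tildeFn (g23Case1 f12 f13) d < tildeFn f12 d := fun _ =>
    tildeFn_g23Case1_lt h12 h13
  have hint := tendsto_integral_atBot_of_le (contDiffOn_tildeFn_g23Case1 h12 h13).continuousOn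
    h12.continuousOn_tildeFn (fun x hx => (hlt x hx).le) h12.2.2.2
  exact ⟨hlt, hint, contDiffOn_g23Case1 h12 h13, fun _ hd => deriv_tildeFn_g23Case1_pos h12 h13 hd,
    exists_tildeFn_g23Case1_eq_zero h12 h13, hint⟩
end

section
/- Let f_12, f_13 ∈ 𝓕 and let g_23 be the case-2 virtual interaction they induce. Although g_23 itself need not lie in 𝓕, for every f ∈ 𝓕 the sum f + g_23 lies in 𝓕. -/
open Set Filter Topology MeasureTheory Matrix Function

attribute [local instance] Classical.propDecidable

/-!
Write `h = f̃₁₂` and `k = f̃₁₃`: both are `C¹` and strictly increasing on `ℝ₊`, tend to `-∞` at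
`0⁺` (a consequence of (C2) and monotonicity) and are eventually positive. For `d > 0` the balance
equation `h t + k (t + d) = 0` therefore has a unique root `t = d₁₂(d) > 0`, which is `C¹` in `d`
by the implicit function theorem. Differentiating the balance equation gives
`h' d₁₂' + k' (d₁₂' + 1) = 0`, which forces `d₁₂' + 1 > 0`, so `g̃₂₃ = k (d₁₂ + d)` has positive
derivative; also `g̃₂₃(d) > k d` is eventually positive.

Adding such a `g` to `f ∈ 𝓕` keeps (C1), and since `g̃` is bounded above by `g̃ 1` on `(0, 1]`,
`f̃ + g̃` still tends to `-∞` at `0⁺` (so it has a zero by the intermediate value theorem) and its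
integral over `[d, 1]` still diverges to `-∞`.
-/

theorem exists_pos_eq_zero_of_continuousOn_Ioi {F : ℝ → ℝ} (hF : ContinuousOn F (Ioi 0))
    (h₀ : ∀ᶠ x in 𝓝[>] 0, F x ≤ 0) (hTop : ∀ᶠ x in atTop, 0 ≤ F x) : ∃ x > 0, F x = 0 :=
  isPreconnected_Ioi.intermediate_value₂_eventually₂ (le_principal_iff.2 self_mem_nhdsWithin)
    (le_principal_iff.2 (Ioi_mem_atTop 0)) hF continuousOn_const h₀ hTop

theorem Icc_subset_Ioc_zero_one {d : ℝ} (hd : 0 < d) : Icc d 1 ⊆ Ioc 0 1 :=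
  fun _ hx => ⟨hd.trans_le hx.1, hx.2⟩

theorem MonotoneOn.tendsto_atBot_of_tendsto_intervalIntegral {F : ℝ → ℝ}
    (hF : MonotoneOn F (Ioc 0 1))
    (h : Tendsto (fun d => ∫ x in d..1, F x) (𝓝[>] 0) atBot) :
    Tendsto F (𝓝[>] 0) atBot := by
  rw [tendsto_atBot]
  intro M
  obtain ⟨d₀, hd₀, hFd₀⟩ : ∃ d₀ ∈ Ioc (0 : ℝ) 1, F d₀ ≤ M := by
    by_contra! hM
    have hbound : ∀ d ∈ Ioo (0 : ℝ) 1, -|M| ≤ ∫ x in d..1, F x := by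
      intro d hd
      have hsub := Icc_subset_Ioc_zero_one hd.1
      have hmono : ∫ _ in d..1, M ≤ ∫ x in d..1, F x :=
        intervalIntegral.integral_mono_on hd.2.le intervalIntegrable_const
          (hF.mono (by rwa [uIcc_of_le hd.2.le])).intervalIntegrable
          fun x hx => (hM x (hsub hx)).le
      rw [intervalIntegral.integral_const, smul_eq_mul] at hmono
      nlinarith [abs_nonneg M, le_abs_self M, neg_abs_le M, hd.1, hd.2]
    have hfalse : ∀ᶠ d in 𝓝[>] (0 : ℝ), False := by
      filter_upwards [Ioo_mem_nhdsGT one_pos, h.eventually (eventually_lt_atBot (-|M|))]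
        with d hd hlt
      exact (hbound d hd).not_gt hlt
    obtain ⟨_, hcontra⟩ := hfalse.exists
    exact hcontra
  filter_upwards [Ioo_mem_nhdsGT hd₀.1] with d hd
  exact (hF ⟨hd.1, hd.2.le.trans hd₀.2⟩ hd₀ hd.2.le).trans hFd₀

theorem tendsto_intervalIntegral_add_atBot_of_monotoneOn {F G : ℝ → ℝ}
    (hF : ContinuousOn F (Ioc 0 1)) (hG : MonotoneOn G (Ioc 0 1))
    (h : Tendsto (fun d => ∫ x in d..1, F x) (𝓝[>] 0) atBot) :
    Tendsto (fun d => ∫ x in d..1, (F x + G x)) (𝓝[>] 0) atBot := by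
  refine tendsto_atBot_mono' _ ?_ (tendsto_atBot_add_const_right _ |G 1| h)
  filter_upwards [Ioo_mem_nhdsGT one_pos] with d hd
  have hsub := Icc_subset_Ioc_zero_one hd.1
  have hsub' : uIcc d 1 ⊆ Ioc 0 1 := by rwa [uIcc_of_le hd.2.le]
  have hGint : IntervalIntegrable G volume d 1 := (hG.mono hsub').intervalIntegrable
  have hGle : ∫ x in d..1, G x ≤ ∫ _ in d..1, G 1 :=
    intervalIntegral.integral_mono_on hd.2.le hGint intervalIntegrable_const fun x hx =>
      hG (hsub hx) ⟨one_pos, le_rfl⟩ hx.2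
  rw [intervalIntegral.integral_const, smul_eq_mul] at hGle
  rw [intervalIntegral.integral_add (hF.mono hsub').intervalIntegrable hGint]
  nlinarith [abs_nonneg (G 1), le_abs_self (G 1), neg_abs_le (G 1), hd.1, hd.2]

theorem tildeFn_add (f g : ℝ → ℝ) :
    tildeFn (fun d => f d + g d) = fun d => tildeFn f d + tildeFn g d := by
  ext d; simp only [tildeFn, mul_add]

theorem ContDiffOn.tildeFn {f : ℝ → ℝ} {s : Set ℝ} (hf : ContDiffOn ℝ 1 f s) :
    ContDiffOn ℝ 1 (tildeFn f) s :=
  contDiffOn_id.mul hf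

namespace MemF

variable {f : ℝ → ℝ}

theorem contDiffOn_tildeFn_s11 (hf : MemF f) : ContDiffOn ℝ 1 (tildeFn f) (Ioi 0) :=
  hf.1.tildeFn

theorem continuousOn_tildeFn_s11 (hf : MemF f) : ContinuousOn (tildeFn f) (Ioi 0) :=
  hf.contDiffOn_tildeFn_s11.continuousOn

theorem differentiableAt_tildeFn (hf : MemF f) {d : ℝ} (hd : 0 < d) :
    DifferentiableAt ℝ (tildeFn f) d :=
  (hf.contDiffOn_tildeFn_s11.contDiffAt (Ioi_mem_nhds hd)).differentiableAt one_ne_zero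

theorem strictMonoOn_tildeFn_s11 (hf : MemF f) : StrictMonoOn (tildeFn f) (Ioi 0) :=
  strictMonoOn_of_deriv_pos (convex_Ioi 0) hf.continuousOn_tildeFn_s11
    (by rw [interior_Ioi]; exact hf.2.1)

theorem eventually_tildeFn_pos (hf : MemF f) : ∀ᶠ d in atTop, 0 < tildeFn f d := by
  obtain ⟨z, hz, hz0⟩ := hf.2.2.1
  filter_upwards [eventually_gt_atTop z] with d hd
  exact hz0 ▸ hf.strictMonoOn_tildeFn_s11 hz (hz.trans hd) hd

theorem tendsto_tildeFn_atBot_s11 (hf : MemF f) : Tendsto (tildeFn f) (𝓝[>] 0) atBot :=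
  (hf.strictMonoOn_tildeFn_s11.monotoneOn.mono
    Ioc_subset_Ioi_self).tendsto_atBot_of_tendsto_intervalIntegral hf.2.2.2

end MemF

theorem MemF.add {f g : ℝ → ℝ} (hf : MemF f) (hg : ContDiffOn ℝ 1 g (Ioi 0))
    (hg' : ∀ d > 0, 0 ≤ deriv (tildeFn g) d) (hgTop : ∀ᶠ d in atTop, 0 ≤ tildeFn g d) :
    MemF (fun d => f d + g d) := by
  have hG := hg.tildeFn
  have hGdiff : ∀ d > 0, DifferentiableAt ℝ (tildeFn g) d := fun d hd =>
    (hG.contDiffAt (Ioi_mem_nhds hd)).differentiableAt one_ne_zero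
  have hGmono : MonotoneOn (tildeFn g) (Ioi 0) :=
    monotoneOn_of_deriv_nonneg (convex_Ioi 0) hG.continuousOn
      (by rw [interior_Ioi]; exact fun d hd => (hGdiff d hd).differentiableWithinAt)
      (by rw [interior_Ioi]; exact hg')
  refine ⟨hf.1.add hg, fun d hd => ?_, ?_, ?_⟩ <;> rw [tildeFn_add]
  · rw [deriv_fun_add (hf.differentiableAt_tildeFn hd) (hGdiff d hd)]
    exact add_pos_of_pos_of_nonneg (hf.2.1 d hd) (hg' d hd)
  · refine exists_pos_eq_zero_of_continuousOn_Ioi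
      (hf.continuousOn_tildeFn_s11.add hG.continuousOn) ?_ ?_
    · filter_upwards [hf.tendsto_tildeFn_atBot_s11.eventually (eventually_le_atBot (-tildeFn g 1)),
        Ioo_mem_nhdsGT one_pos] with d hfd hd
      linarith [hGmono hd.1 (mem_Ioi.2 one_pos) hd.2.le]
    · filter_upwards [hf.eventually_tildeFn_pos, hgTop] with d h1 h2
      linarith
  · exact tendsto_intervalIntegral_add_atBot_of_monotoneOn
      (hf.continuousOn_tildeFn_s11.mono Ioc_subset_Ioi_self) (hGmono.mono Ioc_subset_Ioi_self)
      hf.2.2.2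

theorem ContinuousLinearMap.isInvertible_of_isUnit_apply_one {R : Type*} [Ring R]
    [TopologicalSpace R] [IsTopologicalRing R] {L : R →L[R] R} (h : IsUnit (L 1)) :
    L.IsInvertible :=
  ⟨ContinuousLinearEquiv.unitsEquivAut R h.unit, ContinuousLinearMap.ext_ring (by simp)⟩

section Case2

variable {f12 f13 : ℝ → ℝ}

theorem exists_case2d12 (h12 : MemF f12) (h13 : MemF f13) {d : ℝ} (hd : 0 < d) :
    ∃ t > 0, tildeFn f12 t + tildeFn f13 (t + d) = 0 := by
  refine exists_pos_eq_zero_of_continuousOn_Ioi (h12.continuousOn_tildeFn_s11.add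
    (h13.continuousOn_tildeFn_s11.comp (continuousOn_id.add continuousOn_const)
      fun t ht => add_pos ht hd)) ?_ ?_
  · filter_upwards [h12.tendsto_tildeFn_atBot_s11.eventually
      (eventually_le_atBot (-tildeFn f13 (1 + d))), Ioo_mem_nhdsGT one_pos] with t ht ht01
    have := h13.strictMonoOn_tildeFn_s11 (add_pos ht01.1 hd) (add_pos one_pos hd)
      (add_lt_add_left ht01.2 d)
    show tildeFn f12 t + tildeFn f13 (t + d) ≤ 0
    linarith
  · filter_upwards [h12.eventually_tildeFn_pos,
      (tendsto_atTop_add_const_right _ d tendsto_id).eventually h13.eventually_tildeFn_pos]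
      with t h1 h2
    exact (add_pos h1 h2).le

theorem case2d12_spec (h12 : MemF f12) (h13 : MemF f13) {d : ℝ} (hd : 0 < d) :
    0 < case2d12 f12 f13 d ∧
      tildeFn f12 (case2d12 f12 f13 d) + tildeFn f13 (case2d12 f12 f13 d + d) = 0 :=
  Classical.epsilon_spec (exists_case2d12 h12 h13 hd)

theorem case2d12_eq (h12 : MemF f12) (h13 : MemF f13) {d t : ℝ} (hd : 0 < d) (ht : 0 < t)
    (he : tildeFn f12 t + tildeFn f13 (t + d) = 0) : case2d12 f12 f13 d = t := by
  obtain ⟨hT, hTe⟩ := case2d12_spec h12 h13 hd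
  have hmono : StrictMonoOn (fun t => tildeFn f12 t + tildeFn f13 (t + d)) (Ioi 0) :=
    fun a ha b hb hab => add_lt_add (h12.strictMonoOn_tildeFn_s11 ha hb hab)
      (h13.strictMonoOn_tildeFn_s11 (add_pos ha hd) (add_pos hb hd) (add_lt_add_left hab d))
  exact hmono.injOn hT ht (hTe.trans he.symm)

theorem contDiffAt_case2d12 (h12 : MemF f12) (h13 : MemF f13) {d : ℝ} (hd : 0 < d) :
    ContDiffAt ℝ 1 (case2d12 f12 f13) d := by
  obtain ⟨ht, he⟩ := case2d12_spec h12 h13 hd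
  set t := case2d12 f12 f13 d
  let Φ : ℝ × ℝ → ℝ := fun p => tildeFn f12 p.2 + tildeFn f13 (p.2 + p.1)
  have hΦ : ContDiffAt ℝ 1 Φ (d, t) := by
    show ContDiffAt ℝ 1 (fun p : ℝ × ℝ => tildeFn f12 p.2 + tildeFn f13 (p.2 + p.1)) (d, t)
    exact ((h12.contDiffOn_tildeFn_s11.contDiffAt (Ioi_mem_nhds ht)).comp (d, t) contDiffAt_snd).add
      ((h13.contDiffOn_tildeFn_s11.contDiffAt (Ioi_mem_nhds (add_pos ht hd))).comp (d, t)
        (contDiffAt_snd.add contDiffAt_fst))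
  have hpartial : HasDerivAt (fun s => Φ (d, s))
      (deriv (tildeFn f12) t + deriv (tildeFn f13) (t + d)) t :=
    (h12.differentiableAt_tildeFn ht).hasDerivAt.add
      ((h13.differentiableAt_tildeFn (add_pos ht hd)).hasDerivAt.comp_add_const t d)
  have hcurve : HasDerivAt (fun s => Φ (d, s)) (fderiv ℝ Φ (d, t) (0, 1)) t :=
    (hΦ.differentiableAt one_ne_zero).hasFDerivAt.comp_hasDerivAt t
      ((hasDerivAt_const t d).prodMk (hasDerivAt_id t))
  have hinv : (fderiv ℝ Φ (d, t) ∘L ContinuousLinearMap.inr ℝ ℝ ℝ).IsInvertible := by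
    refine ContinuousLinearMap.isInvertible_of_isUnit_apply_one (IsUnit.mk0 _ ?_)
    rw [ContinuousLinearMap.comp_apply, ContinuousLinearMap.inr_apply, hcurve.unique hpartial]
    exact (add_pos (h12.2.1 t ht) (h13.2.1 _ (add_pos ht hd))).ne'
  set ψ := hΦ.implicitFunction one_ne_zero hinv
  have hψ : ContDiffAt ℝ 1 ψ d := hΦ.contDiffAt_implicitFunction one_ne_zero hinv
  have hψd : ψ d = t := hΦ.implicitFunction_apply_self one_ne_zero hinv
  have hψpos : ∀ᶠ x in 𝓝 d, 0 < ψ x :=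
    continuousAt_const.eventually_lt hψ.continuousAt (hψd ▸ ht)
  refine hψ.congr_of_eventuallyEq ?_
  filter_upwards [Ioi_mem_nhds hd, hψpos, hΦ.eventually_apply_implicitFunction one_ne_zero hinv]
    with x hx hψx hΦx
  exact case2d12_eq h12 h13 hx hψx (hΦx.trans he)

theorem tildeFn_g23Case2 {d : ℝ} (hd : d ≠ 0) :
    tildeFn (g23Case2 f12 f13) d = tildeFn f13 (case2d12 f12 f13 d + d) :=
  mul_div_cancel₀ _ hd

theorem contDiffAt_tildeFn_case2d13 (h12 : MemF f12) (h13 : MemF f13) {d : ℝ} (hd : 0 < d) :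
    ContDiffAt ℝ 1 (fun x => tildeFn f13 (case2d12 f12 f13 x + x)) d :=
  (h13.contDiffOn_tildeFn_s11.contDiffAt
    (Ioi_mem_nhds (add_pos (case2d12_spec h12 h13 hd).1 hd))).comp
    (f := fun x => case2d12 f12 f13 x + x) d
    ((contDiffAt_case2d12 h12 h13 hd).add contDiffAt_id)

theorem contDiffOn_g23Case2 (h12 : MemF f12) (h13 : MemF f13) :
    ContDiffOn ℝ 1 (g23Case2 f12 f13) (Ioi 0) := fun _ hd =>
  ((contDiffAt_tildeFn_case2d13 h12 h13 hd).div contDiffAt_id hd.ne').contDiffWithinAt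

theorem deriv_tildeFn_g23Case2_pos (h12 : MemF f12) (h13 : MemF f13) {d : ℝ} (hd : 0 < d) :
    0 < deriv (tildeFn (g23Case2 f12 f13)) d := by
  have hG : tildeFn (g23Case2 f12 f13) =ᶠ[𝓝 d]
      fun x => tildeFn f13 (case2d12 f12 f13 x + x) := by
    filter_upwards [Ioi_mem_nhds hd] with x hx using tildeFn_g23Case2 hx.ne'
  rw [hG.deriv_eq]
  set T := case2d12 f12 f13
  have ht : 0 < T d := (case2d12_spec h12 h13 hd).1
  have hT : HasDerivAt T (deriv T d) d :=
    ((contDiffAt_case2d12 h12 h13 hd).differentiableAt one_ne_zero).hasDerivAt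
  have h13' : HasDerivAt (fun x => tildeFn f13 (T x + x))
      (deriv (tildeFn f13) (T d + d) * (deriv T d + 1)) d :=
    (h13.differentiableAt_tildeFn (add_pos ht hd)).hasDerivAt.comp (h := fun x => T x + x) d
      (hT.add (hasDerivAt_id d))
  have h12' : HasDerivAt (fun x => tildeFn f12 (T x))
      (deriv (tildeFn f12) (T d) * deriv T d) d :=
    (h12.differentiableAt_tildeFn ht).hasDerivAt.comp d hT
  -- the balance equation holds on a neighbourhood of `d`, so its derivative vanishes
  have hbalance : deriv (tildeFn f12) (T d) * deriv T d
      + deriv (tildeFn f13) (T d + d) * (deriv T d + 1) = 0 :=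
    (h12'.add h13').unique ((hasDerivAt_const d 0).congr_of_eventuallyEq
      (by filter_upwards [Ioi_mem_nhds hd] with x hx using (case2d12_spec h12 h13 hx).2))
  rw [h13'.deriv]
  have := h12.2.1 _ ht
  have := h13.2.1 _ (add_pos ht hd)
  nlinarith

theorem eventually_tildeFn_g23Case2_pos (h12 : MemF f12) (h13 : MemF f13) :
    ∀ᶠ d in atTop, 0 < tildeFn (g23Case2 f12 f13) d := by
  filter_upwards [h13.eventually_tildeFn_pos, eventually_gt_atTop 0] with d hkd hd
  have ht := (case2d12_spec h12 h13 hd).1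
  rw [tildeFn_g23Case2 hd.ne']
  exact hkd.trans (h13.strictMonoOn_tildeFn_s11 hd (add_pos ht hd) (lt_add_of_pos_left d ht))

end Case2

/-- for the case-2 virtual interaction `g₂₃` induced by `f₁₂, f₁₃ ∈ 𝓕`,
the sum `f + g₂₃` lies in `𝓕` for every `f ∈ 𝓕`. -/
theorem statement11 (f12 f13 : ℝ → ℝ) (h12 : MemF f12) (h13 : MemF f13) :
    ∀ f : ℝ → ℝ, MemF f → MemF (fun d => f d + g23Case2 f12 f13 d) := fun _ hf =>
  hf.add (contDiffOn_g23Case2 h12 h13) (fun _ hd => (deriv_tildeFn_g23Case2_pos h12 h13 hd).le)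
    ((eventually_tildeFn_g23Case2_pos h12 h13).mono fun _ h => h.le)
end
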